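/- arXiv:1602.01297 — 2 statements merged into one kernel-verified Lean document; each statement's English description precedes it below -/
import Mathlib

section
/- Let G be a group, H a normal subgroup of index 2 generated together with an element ε of G with ε² = 1, ε ∉ H. Let σ₀ be a finite-dimensional irreducible representation of H with σ₀^ε ≅ σ₀ (where σ₀^ε(h) = σ₀(ε⁻¹hε)), and suppose U ≤ H is a subgroup normalized by ε, μ a character of U fixed by conjugation by ε, with dim Hom_U(σ₀, μ) = 1. If σ₁, σ₂ are the two extensions of σ₀ to G, then exactly one of σ₁, σ₂ admits a nonzero U⟨ε⟩-equivariant functional for the extension μ⁺ of μ with μ⁺(ε) = 1, and the other admits one for the extension μ⁻ with μ⁻(ε) = -1. -/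
/-!
The two extensions of `σ₀` agree on `H`, so by Schur's lemma they differ at `ε` by a scalar, which
squares to `1` and is not `1`: hence `σ₂ ε = -σ₁ ε`. Conjugation by `ε` preserves the line of
`(U, μ)`-functionals on `σ₀`, so the spanning functional `ℓ₀` satisfies `ℓ₀ ∘ σ₁ ε = a • ℓ₀` with
`a = ±1`, and then `ℓ₀ ∘ σ₂ ε = -a • ℓ₀`. Since every `(U, μ)`-functional is a multiple of `ℓ₀`,
the only sign that occurs for `σ₁` is `a` and the only one for `σ₂` is `-a`.
-/

def IsIrredRep {k G V : Type*} [CommSemiring k] [Monoid G] [AddCommMonoid V] [Module k V]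
    (σ : Representation k G V) : Prop :=
  ∀ p : Submodule k V, (∀ g v, v ∈ p → σ g v ∈ p) → p = ⊥ ∨ p = ⊤

def HasEqFunc {G V : Type*} [Group G] [AddCommGroup V] [Module ℂ V]
    (σ : Representation ℂ G V) (U : Subgroup G) (μ : U →* ℂˣ) (ε : G) (sgn : ℂ) : Prop :=
  ∃ ℓ : V →ₗ[ℂ] ℂ, ℓ ≠ 0 ∧
    (∀ (u : U) (v : V), ℓ (σ (u : G) v) = (μ u : ℂ) * ℓ v) ∧
    ∀ v : V, ℓ (σ ε v) = sgn * ℓ v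

theorem eq_one_or_eq_neg_one_of_smul_smul_eq {K M : Type*} [Field K] [AddCommGroup M]
    [Module K M] {a : K} {x : M} (hx : x ≠ 0) (h : a • a • x = x) : a = 1 ∨ a = -1 := by
  have hzero : (a * a - 1) • x = 0 := by rw [sub_smul, mul_smul, h, one_smul, sub_self]
  exact mul_self_eq_one_iff.mp (sub_eq_zero.mp ((smul_eq_zero.mp hzero).resolve_right hx))

theorem eq_one_or_eq_neg_one_of_comp_eq_smul {K M : Type*} [Field K] [AddCommGroup M]
    [Module K M] {T : Module.End K M} (hT : T * T = 1) {ℓ : M →ₗ[K] K} (hℓ : ℓ ≠ 0) {a : K}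
    (ha : ℓ ∘ₗ T = a • ℓ) : a = 1 ∨ a = -1 :=
  eq_one_or_eq_neg_one_of_smul_smul_eq hℓ <| by
    rw [← ha, ← LinearMap.smul_comp, ← ha, LinearMap.comp_assoc, ← Module.End.mul_eq_comp, hT,
      Module.End.one_eq_id, LinearMap.comp_id]

theorem MonoidHom.ext_of_index_two {G M : Type*} [Group G] [Monoid M] {H : Subgroup G}
    (hidx : H.index = 2) {ε : G} (hεH : ε ∉ H) {f₁ f₂ : G →* M} (hH : ∀ h : H, f₁ h = f₂ h)
    (hε : f₁ ε = f₂ ε) : f₁ = f₂ := by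
  ext g
  by_cases hg : g ∈ H
  · exact hH ⟨g, hg⟩
  · have hgε : g * ε⁻¹ ∈ H := by
      rw [Subgroup.mul_mem_iff_of_index_two hidx, inv_mem_iff]
      simp [hg, hεH]
    rw [← inv_mul_cancel_right g ε, map_mul f₁, map_mul f₂, hε]
    exact congrArg (· * f₂ ε) (hH ⟨_, hgε⟩)

theorem MonoidHom.commute_inv_mul_of_eqOn_normal {G M : Type*} [Group G] [Monoid M]
    {H : Subgroup G} [H.Normal] {f₁ f₂ : G →* M} (hH : ∀ h : H, f₁ h = f₂ h) (g : G) (h : H) :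
    Commute (f₁ g⁻¹ * f₂ g) (f₁ h) := by
  have hconj : g * h * g⁻¹ ∈ H := ‹H.Normal›.conj_mem h h.2 g
  calc f₁ g⁻¹ * f₂ g * f₁ h = f₁ g⁻¹ * f₂ (g * h * g⁻¹) * f₂ g := by
        rw [hH, mul_assoc, ← map_mul, mul_assoc, ← map_mul, inv_mul_cancel_right]
    _ = f₁ g⁻¹ * f₁ (g * h * g⁻¹) * f₂ g := by rw [← hH ⟨_, hconj⟩]
    _ = f₁ h * (f₁ g⁻¹ * f₂ g) := by
        rw [← map_mul, ← mul_assoc, map_mul f₁ (g⁻¹ * _), inv_mul_cancel_left, mul_assoc]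

theorem IsIrredRep.exists_eq_smul_one_of_commute {M V : Type*} [Monoid M] [AddCommGroup V]
    [Module ℂ V] [FiniteDimensional ℂ V] [Nontrivial V] {σ : Representation ℂ M V}
    (hirr : IsIrredRep σ) (T : Module.End ℂ V) (hT : ∀ m, Commute T (σ m)) :
    ∃ c : ℂ, T = c • 1 := by
  obtain ⟨c, hc⟩ := Module.End.exists_eigenvalue T
  have hinv : ∀ m v, v ∈ T.eigenspace c → σ m v ∈ T.eigenspace c := by
    intro m v hv
    rw [Module.End.mem_eigenspace_iff] at hv ⊢
    rw [← Module.End.mul_apply, (hT m).eq, Module.End.mul_apply, hv, map_smul]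
  refine ⟨c, ?_⟩
  rcases hirr _ hinv with h | h
  · exact absurd h hc
  · ext v
    have hv : v ∈ T.eigenspace c := h ▸ Submodule.mem_top
    simpa [Module.End.mem_eigenspace_iff] using hv

theorem IsIrredRep.apply_eq_neg_of_extensions_ne {G V : Type*} [Group G] [AddCommGroup V]
    [Module ℂ V] [FiniteDimensional ℂ V] [Nontrivial V] {H : Subgroup G} [H.Normal]
    (hidx : H.index = 2) {ε : G} (hεH : ε ∉ H) (hε2 : ε * ε = 1) {σ₀ : Representation ℂ H V}
    (hirr : IsIrredRep σ₀) {σ₁ σ₂ : Representation ℂ G V} (hext₁ : ∀ h : H, σ₁ h = σ₀ h)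
    (hext₂ : ∀ h : H, σ₂ h = σ₀ h) (hne : σ₁ ≠ σ₂) : σ₂ ε = -σ₁ ε := by
  have hH : ∀ h : H, σ₁ h = σ₂ h := fun h => (hext₁ h).trans (hext₂ h).symm
  obtain ⟨c, hc⟩ := hirr.exists_eq_smul_one_of_commute (σ₁ ε⁻¹ * σ₂ ε) fun h =>
    hext₁ h ▸ MonoidHom.commute_inv_mul_of_eqOn_normal hH ε h
  have hσε : σ₂ ε = c • σ₁ ε := by
    calc σ₂ ε = σ₁ ε * (σ₁ ε⁻¹ * σ₂ ε) := by
          rw [← mul_assoc, ← map_mul, mul_inv_cancel, map_one, one_mul]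
      _ = c • σ₁ ε := by rw [hc, mul_smul_comm, mul_one]
  have hinvol : ∀ σ : Representation ℂ G V, σ ε * σ ε = 1 := fun σ => by
    rw [← map_mul, hε2, map_one]
  have hc2 : c • c • (1 : Module.End ℂ V) = 1 := by
    conv_rhs => rw [← hinvol σ₂, hσε, smul_mul_smul_comm, hinvol σ₁, mul_smul]
  rcases eq_one_or_eq_neg_one_of_smul_smul_eq one_ne_zero hc2 with rfl | rfl
  · exact absurd (MonoidHom.ext_of_index_two hidx hεH hH (by rw [hσε, one_smul])) hne
  · rw [hσε, neg_one_smul]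

section EquivariantFunctional

variable {G V : Type*} [Group G] [AddCommGroup V] [Module ℂ V]

def IsEquivariantFunctional (σ : Representation ℂ G V) {U : Subgroup G} (μ : U →* ℂˣ)
    (ℓ : V →ₗ[ℂ] ℂ) : Prop :=
  ∀ (u : U) (v : V), ℓ (σ u v) = μ u * ℓ v

theorem isEquivariantFunctional_iff_of_extends {H : Subgroup G} {σ₀ : Representation ℂ H V}
    {σ : Representation ℂ G V} (hext : ∀ h : H, σ h = σ₀ h) {U : Subgroup G} (hUH : U ≤ H)
    (μ : U →* ℂˣ) (ℓ : V →ₗ[ℂ] ℂ) :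
    IsEquivariantFunctional σ μ ℓ ↔
      ∀ (u : U) (v : V), ℓ (σ₀ ⟨(u : G), hUH u.2⟩ v) = (μ u : ℂ) * ℓ v := by
  simp only [IsEquivariantFunctional, ← hext]

theorem IsEquivariantFunctional.comp_inv {σ : Representation ℂ G V} {U : Subgroup G}
    {μ : U →* ℂˣ} {ℓ : V →ₗ[ℂ] ℂ} (hℓ : IsEquivariantFunctional σ μ ℓ) {g : G}
    (hU : ∀ u ∈ U, g⁻¹ * u * g ∈ U)
    (hμ : ∀ (u : G) (hu : u ∈ U) (hu' : g⁻¹ * u * g ∈ U), μ ⟨g⁻¹ * u * g, hu'⟩ = μ ⟨u, hu⟩) :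
    IsEquivariantFunctional σ μ (ℓ ∘ₗ σ g⁻¹) := by
  intro u v
  have hu' := hU u u.2
  calc ℓ (σ g⁻¹ (σ u v)) = ℓ (σ (⟨g⁻¹ * u * g, hu'⟩ : U) (σ g⁻¹ v)) := by
        rw [← Module.End.mul_apply, ← map_mul, ← Module.End.mul_apply, ← map_mul]
        simp only [mul_inv_cancel_right]
    _ = μ u * ℓ (σ g⁻¹ v) := by rw [hℓ, hμ u u.2 hu']

theorem hasEqFunc_iff_eq_of_forall_eq_smul {σ : Representation ℂ G V} {U : Subgroup G}
    {μ : U →* ℂˣ} {ℓ₀ : V →ₗ[ℂ] ℂ} (hℓ₀ : ℓ₀ ≠ 0) (hℓ₀μ : IsEquivariantFunctional σ μ ℓ₀)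
    (hspan : ∀ ℓ, IsEquivariantFunctional σ μ ℓ → ∃ b : ℂ, ℓ = b • ℓ₀) {ε : G} {a : ℂ}
    (ha : ℓ₀ ∘ₗ σ ε = a • ℓ₀) (s : ℂ) : HasEqFunc σ U μ ε s ↔ s = a := by
  constructor
  · rintro ⟨ℓ, hℓ, hℓμ, hℓε⟩
    obtain ⟨b, rfl⟩ := hspan ℓ hℓμ
    have hb : b ≠ 0 := by rintro rfl; exact hℓ (zero_smul _ _)
    have hzero : (b * (s - a)) • ℓ₀ = 0 := by
      ext v
      have hav := LinearMap.congr_fun ha v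
      simp only [LinearMap.smul_apply, LinearMap.comp_apply, LinearMap.zero_apply, smul_eq_mul]
        at hℓε hav ⊢
      linear_combination -(hℓε v) + b * hav
    have hcoeff := (smul_eq_zero.mp hzero).resolve_right hℓ₀
    exact sub_eq_zero.mp ((mul_eq_zero.mp hcoeff).resolve_left hb)
  · rintro rfl
    exact ⟨ℓ₀, hℓ₀, hℓ₀μ, fun v => LinearMap.congr_fun ha v⟩

end EquivariantFunctional

/-- with `G = H⟨ε⟩`, `ε² = 1`, `σ₀` irreducible with a one-dimensional
space of `(U,μ)`-equivariant functionals, exactly one of the two extensions `σ₁, σ₂`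
of `σ₀` to `G` admits a nonzero `μ⁺`-functional (with `μ⁺(ε) = 1`), and the other
admits a nonzero `μ⁻`-functional (with `μ⁻(ε) = -1`). -/
theorem stmt2 {G V : Type*} [Group G] [AddCommGroup V] [Module ℂ V]
    [FiniteDimensional ℂ V] [Nontrivial V]
    (H : Subgroup G) [H.Normal] (hidx : H.index = 2)
    (ε : G) (hεH : ε ∉ H) (hε2 : ε * ε = 1)
    (σ₀ : Representation ℂ H V) (hirr₀ : IsIrredRep σ₀)
    (U : Subgroup G) (hUH : U ≤ H)
    (hUnorm : ∀ u ∈ U, ε⁻¹ * u * ε ∈ U)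
    (μ : U →* ℂˣ)
    (hμε : ∀ (u : G) (hu : u ∈ U) (hu' : ε⁻¹ * u * ε ∈ U),
      μ ⟨ε⁻¹ * u * ε, hu'⟩ = μ ⟨u, hu⟩)
    (hdim : ∃ ℓ₀ : V →ₗ[ℂ] ℂ, ℓ₀ ≠ 0 ∧
      (∀ (u : U) (v : V), ℓ₀ (σ₀ ⟨(u : G), hUH u.2⟩ v) = (μ u : ℂ) * ℓ₀ v) ∧
      ∀ ℓ : V →ₗ[ℂ] ℂ,
        (∀ (u : U) (v : V), ℓ (σ₀ ⟨(u : G), hUH u.2⟩ v) = (μ u : ℂ) * ℓ v) →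
        ∃ a : ℂ, ℓ = a • ℓ₀)
    (σ₁ σ₂ : Representation ℂ G V)
    (hext₁ : ∀ h : H, σ₁ (h : G) = σ₀ h) (hext₂ : ∀ h : H, σ₂ (h : G) = σ₀ h)
    (hne : σ₁ ≠ σ₂) :
    (HasEqFunc σ₁ U μ ε 1 ∧ HasEqFunc σ₂ U μ ε (-1) ∧
      ¬ HasEqFunc σ₁ U μ ε (-1) ∧ ¬ HasEqFunc σ₂ U μ ε 1) ∨
    (HasEqFunc σ₂ U μ ε 1 ∧ HasEqFunc σ₁ U μ ε (-1) ∧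
      ¬ HasEqFunc σ₂ U μ ε (-1) ∧ ¬ HasEqFunc σ₁ U μ ε 1) := by
  have hσε := hirr₀.apply_eq_neg_of_extensions_ne hidx hεH hε2 hext₁ hext₂ hne
  obtain ⟨ℓ₀, hℓ₀, hℓ₀μ, hspan⟩ := hdim
  have hequiv₁ := isEquivariantFunctional_iff_of_extends hext₁ hUH μ
  have hequiv₂ := isEquivariantFunctional_iff_of_extends hext₂ hUH μ
  have hεℓ₀ : IsEquivariantFunctional σ₁ μ (ℓ₀ ∘ₗ σ₁ ε) := by
    simpa only [inv_eq_of_mul_eq_one_right hε2] using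
      ((hequiv₁ ℓ₀).2 hℓ₀μ).comp_inv hUnorm hμε
  obtain ⟨a, ha₁⟩ := hspan _ ((hequiv₁ _).1 hεℓ₀)
  have ha₂ : ℓ₀ ∘ₗ σ₂ ε = (-a) • ℓ₀ := by rw [hσε, LinearMap.comp_neg, ha₁, neg_smul]
  have hsign : a = 1 ∨ a = -1 := eq_one_or_eq_neg_one_of_comp_eq_smul
    (by rw [← map_mul, hε2, map_one]) hℓ₀ ha₁
  have h₁ := hasEqFunc_iff_eq_of_forall_eq_smul hℓ₀ ((hequiv₁ ℓ₀).2 hℓ₀μ)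
    (fun ℓ hℓ => hspan ℓ ((hequiv₁ ℓ).1 hℓ)) ha₁
  have h₂ := hasEqFunc_iff_eq_of_forall_eq_smul hℓ₀ ((hequiv₂ ℓ₀).2 hℓ₀μ)
    (fun ℓ hℓ => hspan ℓ ((hequiv₂ ℓ).1 hℓ)) ha₂
  rcases hsign with rfl | rfl <;> norm_num [h₁, h₂]
end

section
/- Let G be a group, H a normal subgroup of index 2, σ₀ an irreducible complex representation of H such that the induced representation σ = Ind_H^G(σ₀) is irreducible. Let U ≤ H be a subgroup, μ: U → ℂ× a character with dim Hom_U(σ₀, μ) = 1, and suppose U is normalized by an element ε ∈ G \ H with ε² = 1 and μ(ε⁻¹uε) = μ(u). Then Hom_{U⟨ε⟩}(σ, μ⁺) ≠ 0 and Hom_{U⟨ε⟩}(σ, μ⁻) ≠ 0, where μ^± are the two extensions of μ to U⟨ε⟩ with μ^±(ε) = ±1. -/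
/-!
Frobenius reciprocity, made explicit: a `μ`-equivariant functional `ℓ₀` on `σ₀` induces on
`Ind σ₀ = V × V` the functional `(v₁, v₂) ↦ ℓ₀ v₁ + s ℓ₀ v₂`. It is `μ`-equivariant on `U`
because `μ` is invariant under conjugation by `ε`, and since `s² = 1` it transforms by `s`
under the swap `ε`. The choices `s = ±1` give the two extensions `μ^±`.
-/

theorem LinearMap.coprod_ne_zero_of_left_ne_zero {R M M₂ M₃ : Type*} [Semiring R]
    [AddCommMonoid M] [AddCommMonoid M₂] [AddCommMonoid M₃]
    [Module R M] [Module R M₂] [Module R M₃]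
    {f : M →ₗ[R] M₃} (hf : f ≠ 0) (g : M₂ →ₗ[R] M₃) : f.coprod g ≠ 0 := by
  intro h
  apply hf
  rw [← LinearMap.coprod_inl f g, h, LinearMap.zero_comp]

theorem LinearMap.coprod_smul_self_apply_swap {R M : Type*} [CommRing R]
    [AddCommMonoid M] [Module R M] (ℓ : M →ₗ[R] R) {s : R} (hs : s * s = 1) (v : M × M) :
    ℓ.coprod (s • ℓ) v.swap = s * ℓ.coprod (s • ℓ) v := by
  simp only [Prod.fst_swap, Prod.snd_swap, LinearMap.coprod_apply, LinearMap.smul_apply,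
    smul_eq_mul]
  linear_combination (-ℓ v.2) * hs

theorem apply_conj_eq_of_equivariant {G V : Type*} [Group G] [AddCommGroup V] [Module ℂ V]
    {H U : Subgroup G} (hUH : U ≤ H) {ε : G} (hUnorm : ∀ u ∈ U, ε⁻¹ * u * ε ∈ U)
    {σ₀ : Representation ℂ H V} {μ : U →* ℂˣ}
    (hμε : ∀ (u : G) (hu : u ∈ U) (hu' : ε⁻¹ * u * ε ∈ U),
      μ ⟨ε⁻¹ * u * ε, hu'⟩ = μ ⟨u, hu⟩)
    {ℓ₀ : V →ₗ[ℂ] ℂ}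
    (hℓ₀ : ∀ (u : U) (v : V), ℓ₀ (σ₀ ⟨(u : G), hUH u.2⟩ v) = (μ u : ℂ) * ℓ₀ v)
    (u : U) (v : V) :
    ℓ₀ (σ₀ ⟨ε⁻¹ * (u : G) * ε, hUH (hUnorm u u.2)⟩ v) = (μ u : ℂ) * ℓ₀ v := by
  rw [← hμε u u.2 (hUnorm u u.2)]
  exact hℓ₀ ⟨ε⁻¹ * (u : G) * ε, hUnorm u u.2⟩ v

theorem hasEqFunc_of_equivariant {G V : Type*} [Group G] [AddCommGroup V] [Module ℂ V]
    {H : Subgroup G} {ε : G} {σ₀ : Representation ℂ H V} {σ : Representation ℂ G (V × V)}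
    (hσH : ∀ (h : G) (hh : h ∈ H) (hh' : ε⁻¹ * h * ε ∈ H),
      σ h = LinearMap.prodMap (σ₀ ⟨h, hh⟩) (σ₀ ⟨ε⁻¹ * h * ε, hh'⟩))
    (hσε : ∀ v : V × V, σ ε v = (v.2, v.1))
    {U : Subgroup G} (hUH : U ≤ H) (hUnorm : ∀ u ∈ U, ε⁻¹ * u * ε ∈ U)
    {μ : U →* ℂˣ}
    (hμε : ∀ (u : G) (hu : u ∈ U) (hu' : ε⁻¹ * u * ε ∈ U),
      μ ⟨ε⁻¹ * u * ε, hu'⟩ = μ ⟨u, hu⟩)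
    {ℓ₀ : V →ₗ[ℂ] ℂ} (hne : ℓ₀ ≠ 0)
    (hℓ₀ : ∀ (u : U) (v : V), ℓ₀ (σ₀ ⟨(u : G), hUH u.2⟩ v) = (μ u : ℂ) * ℓ₀ v)
    {s : ℂ} (hs : s * s = 1) :
    HasEqFunc σ U μ ε s := by
  refine ⟨ℓ₀.coprod (s • ℓ₀), LinearMap.coprod_ne_zero_of_left_ne_zero hne _, ?_, ?_⟩
  · intro u v
    have hconj := apply_conj_eq_of_equivariant hUH hUnorm hμε hℓ₀ u v.2
    rw [hσH u (hUH u.2) (hUH (hUnorm u u.2))]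
    simp only [LinearMap.coprod_apply, LinearMap.prodMap_apply, LinearMap.smul_apply,
      smul_eq_mul, hℓ₀ u v.1, hconj]
    ring
  · intro v
    rw [hσε]
    exact ℓ₀.coprod_smul_self_apply_swap hs v

theorem stmt3_general {G V : Type*} [Group G] [AddCommGroup V] [Module ℂ V]
    (H : Subgroup G)
    (ε : G)
    (σ₀ : Representation ℂ H V)
    (σ : Representation ℂ G (V × V))
    (hσH : ∀ (h : G) (hh : h ∈ H) (hh' : ε⁻¹ * h * ε ∈ H),
      σ h = LinearMap.prodMap (σ₀ ⟨h, hh⟩) (σ₀ ⟨ε⁻¹ * h * ε, hh'⟩))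
    (hσε : ∀ v : V × V, σ ε v = (v.2, v.1))
    (U : Subgroup G) (hUH : U ≤ H)
    (hUnorm : ∀ u ∈ U, ε⁻¹ * u * ε ∈ U)
    (μ : U →* ℂˣ)
    (hμε : ∀ (u : G) (hu : u ∈ U) (hu' : ε⁻¹ * u * ε ∈ U),
      μ ⟨ε⁻¹ * u * ε, hu'⟩ = μ ⟨u, hu⟩)
    (hdim : ∃ ℓ₀ : V →ₗ[ℂ] ℂ, ℓ₀ ≠ 0 ∧
      (∀ (u : U) (v : V), ℓ₀ (σ₀ ⟨(u : G), hUH u.2⟩ v) = (μ u : ℂ) * ℓ₀ v) ∧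
      ∀ ℓ : V →ₗ[ℂ] ℂ,
        (∀ (u : U) (v : V), ℓ (σ₀ ⟨(u : G), hUH u.2⟩ v) = (μ u : ℂ) * ℓ v) →
        ∃ a : ℂ, ℓ = a • ℓ₀) :
    HasEqFunc σ U μ ε 1 ∧ HasEqFunc σ U μ ε (-1) := by
  obtain ⟨ℓ₀, hne, hℓ₀, -⟩ := hdim
  exact ⟨hasEqFunc_of_equivariant hσH hσε hUH hUnorm hμε hne hℓ₀ (one_mul 1),
    hasEqFunc_of_equivariant hσH hσε hUH hUnorm hμε hne hℓ₀ (by norm_num)⟩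

/-- if `σ = Ind_H^G σ₀` is irreducible (realized concretely on `V × V`,
with `h ∈ H` acting by `σ₀(h) × σ₀(ε⁻¹hε)` and `ε` acting by the swap), and
`dim Hom_U(σ₀, μ) = 1`, then `σ` admits nonzero `μ⁺`- and `μ⁻`-equivariant
functionals, where `μ^±` are the extensions of `μ` to `U⟨ε⟩` with `μ^±(ε) = ±1`. -/
theorem stmt3 {G V : Type*} [Group G] [AddCommGroup V] [Module ℂ V]
    (H : Subgroup G) [H.Normal] (hidx : H.index = 2)
    (ε : G) (hεH : ε ∉ H) (hε2 : ε * ε = 1)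
    (σ₀ : Representation ℂ H V) (hirr₀ : IsIrredRep σ₀)
    (σ : Representation ℂ G (V × V))
    (hσH : ∀ (h : G) (hh : h ∈ H) (hh' : ε⁻¹ * h * ε ∈ H),
      σ h = LinearMap.prodMap (σ₀ ⟨h, hh⟩) (σ₀ ⟨ε⁻¹ * h * ε, hh'⟩))
    (hσε : ∀ v : V × V, σ ε v = (v.2, v.1))
    (hirr : IsIrredRep σ)
    (U : Subgroup G) (hUH : U ≤ H)
    (hUnorm : ∀ u ∈ U, ε⁻¹ * u * ε ∈ U)
    (μ : U →* ℂˣ)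
    (hμε : ∀ (u : G) (hu : u ∈ U) (hu' : ε⁻¹ * u * ε ∈ U),
      μ ⟨ε⁻¹ * u * ε, hu'⟩ = μ ⟨u, hu⟩)
    (hdim : ∃ ℓ₀ : V →ₗ[ℂ] ℂ, ℓ₀ ≠ 0 ∧
      (∀ (u : U) (v : V), ℓ₀ (σ₀ ⟨(u : G), hUH u.2⟩ v) = (μ u : ℂ) * ℓ₀ v) ∧
      ∀ ℓ : V →ₗ[ℂ] ℂ,
        (∀ (u : U) (v : V), ℓ (σ₀ ⟨(u : G), hUH u.2⟩ v) = (μ u : ℂ) * ℓ v) →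
        ∃ a : ℂ, ℓ = a • ℓ₀) :
    HasEqFunc σ U μ ε 1 ∧ HasEqFunc σ U μ ε (-1) :=
  stmt3_general H ε σ₀ σ hσH hσε U hUH hUnorm μ hμε hdim
end
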